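/- arXiv:2108.08865 — 2 statements merged into one kernel-verified Lean document; each statement's English description precedes it below -/
import Mathlib

section
/- For n ≥ 2, the augmented cube AQ_n is Hamiltonian connected: between every pair of distinct vertices there is a Hamiltonian path. -/
/-!
Induction on `n`, viewing `AQ (n + 1)` as two copies `b·AQ n` (first bit `b`) joined by the
edges `b·x ~ (!b)·x` and `b·x ~ (!b)·xᶜ`. For endpoints `b·x, b·y` in one copy, take a
Hamiltonian path `x, x', …, y` of `AQ n`, and replace its first edge by a detour that crosses
at `x`, runs through the whole other copy from `x` to `x'`, and crosses back at `x'`. For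
endpoints `b·x, (!b)·y` in different copies, traverse the first copy from `x` to `xᶜ`, then
cross to `(!b)·xᶜ` and finish in the second copy, unless `y = xᶜ`, in which case cross along
the complementary edge to `(!b)·x` instead.
-/

/-- The augmented cube `AQ n` on vertex set `{0,1}^n`: distinct vertices `u, v` are
adjacent iff there is an index `k` such that they agree before `k` and either differ
only at `k` (hypercube-type edge) or differ at `k` and at every later coordinate
(complement-type edge). -/
def AQ (n : ℕ) : SimpleGraph (Fin n → Bool) where
  Adj u v := u ≠ v ∧ ∃ k : Fin n, (∀ i, i < k → u i = v i) ∧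
      ((∀ i, i ≠ k → u i = v i) ∨ (∀ i, k ≤ i → u i ≠ v i))
  symm := by
    constructor
    rintro u v ⟨hne, k, hpre, h⟩
    refine ⟨hne.symm, k, fun i hi => (hpre i hi).symm, ?_⟩
    rcases h with h | h
    · exact Or.inl fun i hi => (h i hi).symm
    · exact Or.inr fun i hi e => h i hi e.symm
  loopless := ⟨fun u h => h.1 rfl⟩

open SimpleGraph

def SimpleGraph.IsHamiltonianConnected {V : Type*} [DecidableEq V] (G : SimpleGraph V) : Prop :=
  ∀ u v, u ≠ v → ∃ p : G.Walk u v, p.IsHamiltonian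

namespace AQ

variable {n : ℕ}

theorem adj_cons_cons_of_adj (b : Bool) {x y : Fin n → Bool} (h : (AQ n).Adj x y) :
    (AQ (n + 1)).Adj (Fin.cons b x) (Fin.cons b y) := by
  obtain ⟨hne, k, hpre, hk⟩ := h
  refine ⟨fun e => hne (Fin.cons_right_injective (α := fun _ => Bool) b e), k.succ, ?_, ?_⟩
  · simpa [Fin.forall_fin_succ] using hpre
  · simpa [Fin.forall_fin_succ, Fin.succ_ne_zero] using hk

theorem adj_cons_cons_of_ne {b c : Bool} (hbc : b ≠ c) {x y : Fin n → Bool}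
    (hy : y = x ∨ y = xᶜ) :
    (AQ (n + 1)).Adj (Fin.cons b x) (Fin.cons c y) := by
  refine ⟨fun e => hbc (by simpa using congrFun e 0), 0, by simp, ?_⟩
  rcases hy with rfl | rfl
  · left; simp [Fin.forall_fin_succ]
  · right; simp [Fin.forall_fin_succ, hbc]

def consHom (n : ℕ) (b : Bool) : AQ n →g AQ (n + 1) where
  toFun x := Fin.cons b x
  map_rel' := adj_cons_cons_of_adj b

theorem count_map_cons_append_map_cons (b : Bool) {l₁ l₂ : List (Fin n → Bool)}
    (h₁ : ∀ x, l₁.count x = 1) (h₂ : ∀ x, l₂.count x = 1) (u : Fin (n + 1) → Bool) :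
    (l₁.map (Fin.cons b) ++ l₂.map (Fin.cons (!b))).count u = 1 := by
  obtain ⟨c, x, rfl⟩ : ∃ c x, u = Fin.cons c x :=
    ⟨u 0, Fin.tail u, (Fin.cons_self_tail u).symm⟩
  have hinj (d : Bool) := Fin.cons_right_injective (n := n) (α := fun _ => Bool) d
  rw [List.count_append]
  cases b <;> cases c <;>
    simp [List.count_map_of_injective _ _ (hinj _), h₁, h₂, List.count_eq_zero]

theorem isHamiltonian_of_perm_support (b : Bool) {u v : Fin (n + 1) → Bool}
    {p : (AQ (n + 1)).Walk u v} {x₁ y₁ x₂ y₂ : Fin n → Bool} {P : (AQ n).Walk x₁ y₁}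
    {Q : (AQ n).Walk x₂ y₂} (hP : P.IsHamiltonian) (hQ : Q.IsHamiltonian)
    (h : p.support.Perm (P.support.map (consHom n b) ++ Q.support.map (consHom n !b))) :
    p.IsHamiltonian := fun w =>
  (h.count_eq w).trans (count_map_cons_append_map_cons b hP hQ w)

theorem exists_isHamiltonian_compl (hG : (AQ n).IsHamiltonianConnected) (x : Fin n → Bool) :
    ∃ p : (AQ n).Walk x xᶜ, p.IsHamiltonian := by
  cases n with
  | zero => exact ⟨Walk.nil.copy rfl (Subsingleton.elim _ _), .of_subsingleton⟩
  | succ n => exact hG x xᶜ fun h => by simpa using congrFun h 0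

theorem exists_isHamiltonian_cons_cons (hG : (AQ n).IsHamiltonianConnected) (b : Bool)
    {x y : Fin n → Bool} (hxy : x ≠ y) :
    ∃ p : (AQ (n + 1)).Walk (consHom n b x) (consHom n b y), p.IsHamiltonian := by
  obtain ⟨P, hP⟩ := hG x y hxy
  cases P with
  | nil => exact absurd rfl hxy
  | @cons _ x' _ hxx' P' =>
    obtain ⟨Q, hQ⟩ := hG x x' hxx'.ne
    have hdown : (AQ (n + 1)).Adj (consHom n b x) (consHom n (!b) x) :=
      adj_cons_cons_of_ne (by simp) (.inl rfl)
    have hup : (AQ (n + 1)).Adj (consHom n (!b) x') (consHom n b x') :=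
      adj_cons_cons_of_ne (by simp) (.inl rfl)
    let p := Walk.cons hdown
      ((Q.map (consHom n !b)).append (Walk.cons hup (P'.map (consHom n b))))
    refine ⟨p, isHamiltonian_of_perm_support b hP hQ ?_⟩
    simpa [p, Walk.support_append] using List.perm_append_comm

theorem exists_isHamiltonian_cons_not_cons (hG : (AQ n).IsHamiltonianConnected) (b : Bool)
    (x y : Fin n → Bool) :
    ∃ p : (AQ (n + 1)).Walk (consHom n b x) (consHom n (!b) y), p.IsHamiltonian := by
  obtain ⟨P, hP⟩ := exists_isHamiltonian_compl hG x
  obtain ⟨z, hz, Q, hQ⟩ :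
      ∃ z, (z = xᶜ ∨ z = xᶜᶜ) ∧ ∃ Q : (AQ n).Walk z y, Q.IsHamiltonian := by
    by_cases hy : y = xᶜ
    · exact ⟨x, .inr (compl_compl x).symm, hy ▸ exists_isHamiltonian_compl hG x⟩
    · exact ⟨xᶜ, .inl rfl, hG _ _ (Ne.symm hy)⟩
  have hcross : (AQ (n + 1)).Adj (consHom n b xᶜ) (consHom n (!b) z) :=
    adj_cons_cons_of_ne (by simp) hz
  let p := (P.map (consHom n b)).append (Walk.cons hcross (Q.map (consHom n !b)))
  exact ⟨p, isHamiltonian_of_perm_support b hP hQ (by simp [p, Walk.support_append])⟩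

theorem isHamiltonianConnected_succ (hG : (AQ n).IsHamiltonianConnected) :
    (AQ (n + 1)).IsHamiltonianConnected := by
  intro u v huv
  obtain ⟨b, x, rfl⟩ : ∃ b x, u = consHom n b x :=
    ⟨u 0, Fin.tail u, (Fin.cons_self_tail u).symm⟩
  obtain ⟨c, y, rfl⟩ : ∃ c y, v = consHom n c y :=
    ⟨v 0, Fin.tail v, (Fin.cons_self_tail v).symm⟩
  obtain rfl | rfl := Bool.eq_or_eq_not c b
  · exact exists_isHamiltonian_cons_cons hG _ fun h => huv (congrArg _ h)
  · exact exists_isHamiltonian_cons_not_cons hG _ x y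

theorem isHamiltonianConnected : ∀ n, (AQ n).IsHamiltonianConnected
  | 0 => fun u v huv => absurd (Subsingleton.elim u v) huv
  | n + 1 => isHamiltonianConnected_succ (isHamiltonianConnected n)

end AQ

theorem aq_hamiltonian_connected_general (n : ℕ) (u v : Fin n → Bool) (huv : u ≠ v) :
    ∃ p : (AQ n).Walk u v, p.IsHamiltonian :=
  AQ.isHamiltonianConnected n u v huv

/-- For `n ≥ 2`, the augmented cube `AQ_n` is Hamiltonian connected: between every pair
of distinct vertices there is a Hamiltonian path. -/
theorem aq_hamiltonian_connected (n : ℕ) (hn : 2 ≤ n) (u v : Fin n → Bool) (huv : u ≠ v) :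
    ∃ p : (AQ n).Walk u v, p.IsHamiltonian :=
  aq_hamiltonian_connected_general n u v huv
end

section
/- For every n ≥ 1 and every k with 3 ≤ k ≤ 2^n, the augmented cube AQ_n contains a cycle of length k (for n ≥ 2). -/
/-!
Let `⟨a⟩ = AQ.binaryVertex n a` be the vertex of `AQ n` whose coordinates are the `n` lowest
binary digits of `a`, most significant first. Incrementing `a` complements its trailing ones and
the next digit, a complement-type edge, so `⟨0⟩, ⟨1⟩, …, ⟨2^n - 1⟩` is a Hamiltonian path; the
complement-type edge `⟨x⟩ ∼ ⟨2^n - 1 - x⟩` closes the segment from `x` to `2^n - 1 - x` into a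
cycle of even length `2^n - 2x`. For odd lengths, drop an interior vertex `j` with
`j - 1 ≡ 0, 1 (mod 4)`: then `j - 1` and `j + 1` differ only in the digit of weight `2`, a
hypercube-type edge. The triangle is `⟨0⟩, ⟨1⟩, ⟨2⟩`.
-/

namespace SimpleGraph

variable {V : Type*} {G : SimpleGraph V}

theorem exists_isCycle_of_injOn {k : ℕ} (hk : 3 ≤ k) (f : ℕ → V)
    (hf : Set.InjOn f (Set.Iio k)) (hstep : ∀ i, i + 1 < k → G.Adj (f i) (f (i + 1)))
    (hclose : G.Adj (f (k - 1)) (f 0)) :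
    ∃ (v : V) (c : G.Walk v v), c.IsCycle ∧ c.length = k := by
  rw [← cycleGraph_isContained_iff hk]
  have adj_of_sub_eq_one (u v : Fin k) (h : (u - v).val = 1) : G.Adj (f u) (f v) := by
    rcases le_or_gt v u with hvu | huv
    · rw [Fin.coe_sub_iff_le.mpr hvu] at h
      rw [show u.val = v.val + 1 by omega]
      exact (hstep v (by omega)).symm
    · rw [Fin.coe_sub_iff_lt.mpr huv] at h
      rw [show u.val = 0 by omega, show v.val = k - 1 by omega]
      exact hclose.symm
  refine ⟨⟨⟨fun i => f i, fun {u v} huv => ?_⟩, fun u v h => Fin.ext (hf u.isLt v.isLt h)⟩⟩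
  rcases cycleGraph_adj'.mp huv with h | h
  · exact adj_of_sub_eq_one u v h
  · exact (adj_of_sub_eq_one v u h).symm

end SimpleGraph

namespace AQ

def binaryVertex (n a : ℕ) : Fin n → Bool := fun i => a.testBit (n - 1 - i)

theorem binaryVertex_injOn (n : ℕ) : Set.InjOn (binaryVertex n) (Set.Iio (2 ^ n)) := by
  intro a ha b hb h
  apply Nat.eq_of_testBit_eq
  intro p
  by_cases hp : p < n
  · simpa [binaryVertex, show n - 1 - (n - 1 - p) = p by omega] using
      congrFun h ⟨n - 1 - p, by omega⟩
  · have h2 : 2 ^ n ≤ 2 ^ p := Nat.pow_le_pow_right two_pos (by omega)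
    rw [Nat.testBit_lt_two_pow (ha.trans_le h2), Nat.testBit_lt_two_pow (hb.trans_le h2)]

theorem adj_binaryVertex {n t a b : ℕ} (ht : t < n)
    (hhigh : ∀ p, t < p → a.testBit p = b.testBit p) (hat : a.testBit t ≠ b.testBit t)
    (hlow : (∀ p < t, a.testBit p = b.testBit p) ∨ ∀ p < t, a.testBit p ≠ b.testBit p) :
    (AQ n).Adj (binaryVertex n a) (binaryVertex n b) := by
  refine ⟨fun h => hat ?_, ⟨n - 1 - t, by omega⟩, fun i hi => hhigh _ ?_, ?_⟩
  · simpa [binaryVertex, show n - 1 - (n - 1 - t) = t by omega] using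
      congrFun h ⟨n - 1 - t, by omega⟩
  · have : i.val < n - 1 - t := hi
    omega
  · rcases hlow with hlow | hlow
    · refine Or.inl fun i hi => ?_
      have : i.val ≠ n - 1 - t := fun h => hi (Fin.ext h)
      rcases lt_or_gt_of_ne this with h | h
      · exact hhigh _ (by omega)
      · exact hlow _ (by omega)
    · refine Or.inr fun i hi => ?_
      have : n - 1 - t ≤ i.val := hi
      rcases this.lt_or_eq with h | h
      · exact hlow _ (by omega)
      · simpa [binaryVertex, ← h, show n - 1 - (n - 1 - t) = t by omega] using hat

theorem adj_binaryVertex_complement_low_bits {n t q r s : ℕ} (ht : t < n)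
    (hrs : r + s + 1 = 2 ^ (t + 1)) :
    (AQ n).Adj (binaryVertex n (2 ^ (t + 1) * q + r)) (binaryVertex n (2 ^ (t + 1) * q + s)) := by
  have hr : r < 2 ^ (t + 1) := by omega
  have hs : s < 2 ^ (t + 1) := by omega
  have hflip (p : ℕ) (hp : p ≤ t) : r.testBit p ≠ s.testBit p := by
    rw [show s = 2 ^ (t + 1) - (r + 1) by omega, Nat.testBit_two_pow_sub_succ hr]
    cases r.testBit p <;> simp [show p < t + 1 by omega]
  apply adj_binaryVertex ht
  · intro p hp
    simp [Nat.testBit_two_pow_mul_add _ hr, Nat.testBit_two_pow_mul_add _ hs,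
      show ¬p < t + 1 by omega]
  · simpa [Nat.testBit_two_pow_mul_add _ hr, Nat.testBit_two_pow_mul_add _ hs] using
      hflip t le_rfl
  · refine Or.inr fun p hp => ?_
    simpa [Nat.testBit_two_pow_mul_add _ hr, Nat.testBit_two_pow_mul_add _ hs,
      show p < t + 1 by omega] using hflip p hp.le

theorem adj_binaryVertex_add_two_pow {n t a : ℕ} (ht : t < n) (ha : a % 2 ^ (t + 1) < 2 ^ t) :
    (AQ n).Adj (binaryVertex n a) (binaryVertex n (a + 2 ^ t)) := by
  obtain ⟨q, r, hr, rfl⟩ : ∃ q r, r < 2 ^ t ∧ a = 2 ^ (t + 1) * q + r :=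
    ⟨a / 2 ^ (t + 1), a % 2 ^ (t + 1), ha, (Nat.div_add_mod a _).symm⟩
  have hr' : r < 2 ^ (t + 1) := by rw [pow_succ]; omega
  have hr'' : 2 ^ t + r < 2 ^ (t + 1) := by rw [pow_succ]; omega
  rw [add_assoc, add_comm r]
  apply adj_binaryVertex ht
  · intro p hp
    simp [Nat.testBit_two_pow_mul_add _ hr', Nat.testBit_two_pow_mul_add _ hr'',
      show ¬p < t + 1 by omega]
  · simp [Nat.testBit_two_pow_mul_add _ hr', Nat.testBit_two_pow_mul_add _ hr'',
      Nat.testBit_two_pow_add_eq, Nat.testBit_lt_two_pow hr]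
  · refine Or.inl fun p hp => ?_
    simp [Nat.testBit_two_pow_mul_add _ hr', Nat.testBit_two_pow_mul_add _ hr'',
      show p < t + 1 by omega, Nat.testBit_two_pow_add_gt hp]

theorem adj_binaryVertex_succ {n a : ℕ} (h : a + 1 < 2 ^ n) :
    (AQ n).Adj (binaryVertex n a) (binaryVertex n (a + 1)) := by
  obtain ⟨t, _, ⟨q, rfl⟩, hdecomp⟩ := Nat.exists_eq_two_pow_mul_odd a.add_one_ne_zero
  have hsplit : a + 1 = 2 ^ (t + 1) * q + 2 ^ t := by rw [hdecomp]; ring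
  have hpos : 1 ≤ 2 ^ t := Nat.one_le_two_pow
  have ht : t < n := (Nat.pow_lt_pow_iff_right one_lt_two).mp (by omega)
  have key := adj_binaryVertex_complement_low_bits (q := q) (r := 2 ^ t - 1) (s := 2 ^ t) ht
    (by rw [pow_succ]; omega)
  rwa [← hsplit, show 2 ^ (t + 1) * q + (2 ^ t - 1) = a by omega] at key

theorem adj_binaryVertex_two_pow_sub {n a : ℕ} (hn : n ≠ 0) (ha : a < 2 ^ n) :
    (AQ n).Adj (binaryVertex n a) (binaryVertex n (2 ^ n - (a + 1))) := by
  obtain ⟨t, rfl⟩ := Nat.exists_eq_succ_of_ne_zero hn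
  simpa using adj_binaryVertex_complement_low_bits (q := 0) (r := a) (s := 2 ^ (t + 1) - (a + 1))
    (Nat.lt_succ_self t) (by omega)

theorem exists_isCycle_Icc {n x y : ℕ} (hxy : x + 2 ≤ y) (hy : y < 2 ^ n)
    (hclose : (AQ n).Adj (binaryVertex n y) (binaryVertex n x)) :
    ∃ (v : Fin n → Bool) (c : (AQ n).Walk v v), c.IsCycle ∧ c.length = y + 1 - x := by
  refine SimpleGraph.exists_isCycle_of_injOn (by omega) (fun i => binaryVertex n (x + i))
    (fun i hi j hj h => ?_) (fun i hi => adj_binaryVertex_succ (by omega)) ?_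
  · simp only [Set.mem_Iio] at hi hj
    have := binaryVertex_injOn n (Set.mem_Iio.mpr (by omega)) (Set.mem_Iio.mpr (by omega)) h
    omega
  · simpa [show x + (y + 1 - x - 1) = y by omega] using hclose

theorem exists_isCycle_Icc_skip {n x j y : ℕ} (hxj : x < j) (hjy : j < y)
    (hj : (j - 1) % 4 < 2) (hxy : x + 3 ≤ y) (hy : y < 2 ^ n)
    (hclose : (AQ n).Adj (binaryVertex n y) (binaryVertex n x)) :
    ∃ (v : Fin n → Bool) (c : (AQ n).Walk v v), c.IsCycle ∧ c.length = y - x := by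
  have hn : 1 < n := (Nat.pow_lt_pow_iff_right one_lt_two).mp (show 2 ^ 1 < 2 ^ n by omega)
  refine SimpleGraph.exists_isCycle_of_injOn (by omega)
    (fun i => binaryVertex n (if x + i < j then x + i else x + i + 1))
    (fun i hi i' hi' h => ?_) (fun i hi => ?_) ?_
  · simp only [Set.mem_Iio] at hi hi'
    have := binaryVertex_injOn n (Set.mem_Iio.mpr (by split_ifs <;> omega))
      (Set.mem_Iio.mpr (by split_ifs <;> omega)) h
    split_ifs at this <;> omega
  · by_cases hskip : x + i + 1 = j
    · rw [if_pos (by omega), if_neg (by omega), show x + i = j - 1 by omega,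
        show x + (i + 1) + 1 = j - 1 + 2 ^ 1 by omega]
      exact adj_binaryVertex_add_two_pow (t := 1) hn hj
    · split_ifs <;> first | omega | exact adj_binaryVertex_succ (by omega)
  · simpa [hxj, show ¬x + (y - x - 1) < j by omega, show x + (y - x - 1) + 1 = y by omega] using
      hclose

end AQ

/-- For `n ≥ 2`, the augmented cube `AQ_n` contains a cycle of every length `k` with
`3 ≤ k ≤ 2^n`. -/
theorem aq_pancyclic (n : ℕ) (hn : 2 ≤ n) (k : ℕ) (hk : 3 ≤ k) (hk' : k ≤ 2 ^ n) :
    ∃ (v : Fin n → Bool) (c : (AQ n).Walk v v), c.IsCycle ∧ c.length = k := by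
  have hpow : 2 ^ n = 2 * 2 ^ (n - 1) := by rw [← pow_succ']; congr; omega
  rcases Nat.even_or_odd' k with ⟨m, rfl | rfl⟩
  · obtain ⟨v, c, hc, hlen⟩ := AQ.exists_isCycle_Icc (x := 2 ^ (n - 1) - m)
      (y := 2 ^ n - (2 ^ (n - 1) - m + 1)) (by omega) (by omega)
      (AQ.adj_binaryVertex_two_pow_sub (by omega) (by omega)).symm
    exact ⟨v, c, hc, by omega⟩
  obtain rfl | hm := eq_or_ne m 1
  · exact AQ.exists_isCycle_Icc (x := 0) (y := 2) le_rfl (by omega)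
      (AQ.adj_binaryVertex_add_two_pow (t := 1) hn (by norm_num)).symm
  · set x := 2 ^ (n - 1) - m - 1
    -- `j` is `x + 1` or `x + 3`, whichever has `j - 1 ≡ 0, 1 (mod 4)`
    obtain ⟨v, c, hc, hlen⟩ := AQ.exists_isCycle_Icc_skip (j := x + 1 + 2 * (x % 4 / 2))
      (y := 2 ^ n - (x + 1)) (by omega) (by omega) (by omega) (by omega) (by omega)
      (AQ.adj_binaryVertex_two_pow_sub (by omega) (by omega)).symm
    exact ⟨v, c, hc, by omega⟩
end
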